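/- arXiv:1903.08922 — 7 statements merged into one kernel-verified Lean document; each statement's English description precedes it below -/
import Mathlib

section
/- Let (L₁, L₂, P, (⊛ᵢ, ↙ⁱ, ↖ᵢ)_{i∈I}) be a multi-adjoint frame and let (X, Y, φ, τ) be a context of this frame. Define φ↑ : (X → L₁) → (Y → L₂) by (φ↑ μ)(y) = ⨅_{x∈X} φ(x,y) ↖_{τ(y)} μ(x), and φ↓ : (Y → L₂) → (X → L₁) by (φ↓ λ)(x) = ⨅_{y∈Y} φ(x,y) ↙^{τ(y)} λ(y). Then (φ↑, φ↓) is an antitone Galois connection: for all μ : X → L₁ and λ : Y → L₂, λ ≤ φ↑ μ (pointwise in L₂) if and only if μ ≤ φ↓ λ (pointwise in L₁). -/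
theorem le_ld_iff_le_lu {L₁ L₂ P : Type*} [LE L₁] [LE L₂] [LE P]
    {w : L₁ → L₂ → P} {ld : P → L₂ → L₁} {lu : P → L₁ → L₂}
    (adj : ∀ x y z, (w x y ≤ z ↔ x ≤ ld z y) ∧ (w x y ≤ z ↔ y ≤ lu z x))
    {x : L₁} {y : L₂} {z : P} : x ≤ ld z y ↔ y ≤ lu z x :=
  (adj x y z).1.symm.trans (adj x y z).2

theorem le_iInf_iff_le_iInf_of_forall_le_iff {X Y α β : Type*} [CompleteLattice α]
    [CompleteLattice β] {f : X → Y → β → α} {g : X → Y → α → β}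
    (h : ∀ x y a b, a ≤ f x y b ↔ b ≤ g x y a) (μ : X → α) (lam : Y → β) :
    (lam ≤ fun y => ⨅ x, g x y (μ x)) ↔ μ ≤ fun x => ⨅ y, f x y (lam y) := by
  simp only [Pi.le_def, le_iInf_iff, h]
  exact forall_comm

/-- For a context of a multi-adjoint frame, the concept-forming
operators `φ↑` and `φ↓` form an antitone Galois connection. -/
theorem stmt_4 {L₁ L₂ P : Type*} [CompleteLattice L₁] [CompleteLattice L₂]
    [CompleteLattice P] {I : Type*}
    (w : I → L₁ → L₂ → P) (ld : I → P → L₂ → L₁) (lu : I → P → L₁ → L₂)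
    (adj : ∀ (i : I) (x : L₁) (y : L₂) (z : P),
      (w i x y ≤ z ↔ x ≤ ld i z y) ∧ (w i x y ≤ z ↔ y ≤ lu i z x))
    {X Y : Type*} (φ : X → Y → P) (τ : Y → I)
    (up : (X → L₁) → Y → L₂) (dn : (Y → L₂) → X → L₁)
    (hup : ∀ (μ : X → L₁) (y : Y), up μ y = ⨅ x, lu (τ y) (φ x y) (μ x))
    (hdn : ∀ (lam : Y → L₂) (x : X), dn lam x = ⨅ y, ld (τ y) (φ x y) (lam y)) :
    ∀ (μ : X → L₁) (lam : Y → L₂), lam ≤ up μ ↔ μ ≤ dn lam := by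
  intro μ lam
  rw [show up μ = _ from funext (hup μ), show dn lam = _ from funext (hdn lam)]
  exact le_iInf_iff_le_iInf_of_forall_le_iff
    (fun x y _ _ => le_ld_iff_le_lu (z := φ x y) (adj (τ y))) μ lam
end

section
/- Let (L₁, L₂, P, (⊛ᵢ, ↙ⁱ, ↖ᵢ)_{i∈I}) be a multi-adjoint frame, (X, Y, φ, τ) a context of this frame, and φ↑, φ↓ the associated concept-forming operators. Then the composite φ↓ ∘ φ↑ is a closure operator on the complete lattice X → L₁ (pointwise order): it is monotone, satisfies μ ≤ φ↓(φ↑ μ) for all μ : X → L₁, and is idempotent, i.e. φ↓(φ↑(φ↓(φ↑ μ))) = φ↓(φ↑ μ). Dually, φ↑ ∘ φ↓ is monotone, satisfies λ ≤ φ↑(φ↓ λ) pointwise in L₂ for all λ : Y → L₂, and is idempotent, so it is a closure operator on Y → L₂ as well. -/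
/-- For a context of a multi-adjoint frame, `φ↓ ∘ φ↑` is a closure
operator on `X → L₁` and `φ↑ ∘ φ↓` is a closure operator on `Y → L₂`. -/
theorem stmt_5 {L₁ L₂ P : Type*} [CompleteLattice L₁] [CompleteLattice L₂]
    [CompleteLattice P] {I : Type*}
    (w : I → L₁ → L₂ → P) (ld : I → P → L₂ → L₁) (lu : I → P → L₁ → L₂)
    (adj : ∀ (i : I) (x : L₁) (y : L₂) (z : P),
      (w i x y ≤ z ↔ x ≤ ld i z y) ∧ (w i x y ≤ z ↔ y ≤ lu i z x))
    {X Y : Type*} (φ : X → Y → P) (τ : Y → I)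
    (up : (X → L₁) → Y → L₂) (dn : (Y → L₂) → X → L₁)
    (hup : ∀ (μ : X → L₁) (y : Y), up μ y = ⨅ x, lu (τ y) (φ x y) (μ x))
    (hdn : ∀ (lam : Y → L₂) (x : X), dn lam x = ⨅ y, ld (τ y) (φ x y) (lam y)) :
    (∀ μ μ' : X → L₁, μ ≤ μ' → dn (up μ) ≤ dn (up μ')) ∧
    (∀ μ : X → L₁, μ ≤ dn (up μ)) ∧
    (∀ μ : X → L₁, dn (up (dn (up μ))) = dn (up μ)) ∧
    (∀ lam lam' : Y → L₂, lam ≤ lam' → up (dn lam) ≤ up (dn lam')) ∧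
    (∀ lam : Y → L₂, lam ≤ up (dn lam)) ∧
    (∀ lam : Y → L₂, up (dn (up (dn lam))) = up (dn lam)) := by
  -- w is monotone in each argument
  have wmono1 : ∀ (i : I) (y : L₂) {x x' : L₁}, x ≤ x' → w i x y ≤ w i x' y := by
    intro i y x x' h
    have := (adj i x' y (w i x' y)).1.mp le_rfl
    exact (adj i x y (w i x' y)).1.mpr (h.trans this)
  have wmono2 : ∀ (i : I) (x : L₁) {y y' : L₂}, y ≤ y' → w i x y ≤ w i x y' := by
    intro i x y y' h
    have := (adj i x y' (w i x y')).2.mp le_rfl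
    exact (adj i x y (w i x y')).2.mpr (h.trans this)
  -- lu antitone in last argument
  have lu_anti : ∀ (i : I) (z : P) {x x' : L₁}, x ≤ x' → lu i z x' ≤ lu i z x := by
    intro i z x x' h
    have h1 : w i x' (lu i z x') ≤ z := (adj i x' (lu i z x') z).2.mpr le_rfl
    exact (adj i x (lu i z x') z).2.mp ((wmono1 i _ h).trans h1)
  -- ld antitone in last argument
  have ld_anti : ∀ (i : I) (z : P) {y y' : L₂}, y ≤ y' → ld i z y' ≤ ld i z y := by
    intro i z y y' h
    have h1 : w i (ld i z y') y' ≤ z := (adj i (ld i z y') y' z).1.mpr le_rfl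
    exact (adj i (ld i z y') y z).1.mp ((wmono2 i _ h).trans h1)
  -- up, dn antitone
  have up_anti : ∀ {μ μ' : X → L₁}, μ ≤ μ' → up μ' ≤ up μ := by
    intro μ μ' h y
    rw [hup, hup]
    exact iInf_mono fun x => lu_anti _ _ (h x)
  have dn_anti : ∀ {l l' : Y → L₂}, l ≤ l' → dn l' ≤ dn l := by
    intro l l' h x
    rw [hdn, hdn]
    exact iInf_mono fun y => ld_anti _ _ (h y)
  -- unit
  have unit : ∀ μ : X → L₁, μ ≤ dn (up μ) := by
    intro μ x
    rw [hdn]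
    refine le_iInf fun y => ?_
    refine (adj (τ y) (μ x) (up μ y) (φ x y)).1.mp ?_
    refine (adj (τ y) (μ x) (up μ y) (φ x y)).2.mpr ?_
    rw [hup]
    exact iInf_le _ x
  have counit : ∀ l : Y → L₂, l ≤ up (dn l) := by
    intro l y
    rw [hup]
    refine le_iInf fun x => ?_
    refine (adj (τ y) (dn l x) (l y) (φ x y)).2.mp ?_
    refine (adj (τ y) (dn l x) (l y) (φ x y)).1.mpr ?_
    rw [hdn]
    exact iInf_le _ y
  have updn : ∀ μ : X → L₁, up (dn (up μ)) = up μ := fun μ =>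
    le_antisymm (up_anti (unit μ)) (counit (up μ))
  have dnup : ∀ l : Y → L₂, dn (up (dn l)) = dn l := fun l =>
    le_antisymm (dn_anti (counit l)) (unit (dn l))
  refine ⟨fun μ μ' h => dn_anti (up_anti h), unit, fun μ => by rw [updn], 
    fun l l' h => up_anti (dn_anti h), counit, fun l => by rw [dnup]⟩
end

section
/- Let (L₁, L₂, P, (⊛ᵢ, ↙ⁱ, ↖ᵢ)_{i∈I}) be a multi-adjoint frame, (X, Y, φ, τ) a context of this frame, and φ↑, φ↓ the associated concept-forming operators. Then the set Fix(φ↓∘φ↑) = { μ : X → L₁ ∣ φ↓(φ↑ μ) = μ }, ordered pointwise, is a complete lattice in which the infimum of a family (μⱼ)_{j∈J} ⊆ Fix(φ↓∘φ↑) is the pointwise infimum ⨅ⱼ μⱼ, and its supremum is φ↓(φ↑(⨆ⱼ μⱼ)), the closure of the pointwise supremum. -/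
/-!
The two concept-forming operators form an antitone Galois connection: unfolding the infima,
`μ ≤ φ↓ λ` and `λ ≤ φ↑ μ` both say `μ x ≤ φ(x,y) ↙^{τ y} λ y` for all `x, y`, by the adjoint
triple property at each pair `(x, y)`. Hence `φ↓ ∘ φ↑` is a closure operator, and the fixed
points of any closure operator on a complete lattice are closed under infima, with the closure
of the supremum as their least upper bound.
-/

open OrderDual

theorem ClosureOperator.iInf_isClosed {α ι : Type*} [CompleteLattice α] {c : ClosureOperator α}
    {f : ι → α} (hf : ∀ i, c.IsClosed (f i)) : c.IsClosed (⨅ i, f i) := by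
  rw [← sInf_range]
  exact ClosureOperator.sInf_isClosed (Set.forall_mem_range.2 hf)

theorem MultiAdjoint.galoisConnection {L₁ L₂ P I X Y : Type*} [CompleteLattice L₁]
    [CompleteLattice L₂] [CompleteLattice P]
    {w : I → L₁ → L₂ → P} {ld : I → P → L₂ → L₁} {lu : I → P → L₁ → L₂}
    (adj : ∀ (i : I) (x : L₁) (y : L₂) (z : P),
      (w i x y ≤ z ↔ x ≤ ld i z y) ∧ (w i x y ≤ z ↔ y ≤ lu i z x))
    {φ : X → Y → P} {τ : Y → I} {up : (X → L₁) → Y → L₂} {dn : (Y → L₂) → X → L₁}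
    (hup : ∀ (μ : X → L₁) (y : Y), up μ y = ⨅ x, lu (τ y) (φ x y) (μ x))
    (hdn : ∀ (lam : Y → L₂) (x : X), dn lam x = ⨅ y, ld (τ y) (φ x y) (lam y)) :
    GaloisConnection (toDual ∘ up) (dn ∘ ofDual) := by
  intro μ lam
  simp only [Function.comp_apply, toDual_le, Pi.le_def, hup, hdn, le_iInf_iff]
  rw [forall_comm]
  exact forall₂_congr fun x y =>
    ((adj (τ y) (μ x) (ofDual lam y) (φ x y)).1.symm.trans (adj _ _ _ _).2).symm

/-- The fixed points of `φ↓ ∘ φ↑`, ordered pointwise, form a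
complete lattice in which the infimum of a family of fixed points is the
pointwise infimum and the supremum is the closure `φ↓(φ↑(⨆ⱼ μⱼ))` of the
pointwise supremum. -/
theorem stmt_6 {L₁ L₂ P : Type*} [CompleteLattice L₁] [CompleteLattice L₂]
    [CompleteLattice P] {I : Type*}
    (w : I → L₁ → L₂ → P) (ld : I → P → L₂ → L₁) (lu : I → P → L₁ → L₂)
    (adj : ∀ (i : I) (x : L₁) (y : L₂) (z : P),
      (w i x y ≤ z ↔ x ≤ ld i z y) ∧ (w i x y ≤ z ↔ y ≤ lu i z x))
    {X Y : Type*} (φ : X → Y → P) (τ : Y → I)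
    (up : (X → L₁) → Y → L₂) (dn : (Y → L₂) → X → L₁)
    (hup : ∀ (μ : X → L₁) (y : Y), up μ y = ⨅ x, lu (τ y) (φ x y) (μ x))
    (hdn : ∀ (lam : Y → L₂) (x : X), dn lam x = ⨅ y, ld (τ y) (φ x y) (lam y))
    {J : Type*} (μ : J → X → L₁) (hμ : ∀ j, dn (up (μ j)) = μ j) :
    -- the pointwise infimum is a fixed point ...
    dn (up (⨅ j, μ j)) = ⨅ j, μ j ∧
    -- ... and is the greatest lower bound of the family among fixed points
    (∀ j, (⨅ j, μ j) ≤ μ j) ∧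
    (∀ ν : X → L₁, dn (up ν) = ν → (∀ j, ν ≤ μ j) → ν ≤ ⨅ j, μ j) ∧
    -- the closure of the pointwise supremum is a fixed point ...
    dn (up (dn (up (⨆ j, μ j)))) = dn (up (⨆ j, μ j)) ∧
    -- ... and is the least upper bound of the family among fixed points
    (∀ j, μ j ≤ dn (up (⨆ j, μ j))) ∧
    (∀ ν : X → L₁, dn (up ν) = ν → (∀ j, μ j ≤ ν) → dn (up (⨆ j, μ j)) ≤ ν) := by
  let c := (MultiAdjoint.galoisConnection adj hup hdn).closureOperator
  have hc : ∀ ν, c ν = dn (up ν) := fun _ => rfl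
  have hclosed : ∀ {ν}, dn (up ν) = ν → c.IsClosed ν := c.isClosed_iff.2
  simp only [← hc] at hμ ⊢
  exact ⟨(ClosureOperator.iInf_isClosed fun j => hclosed (hμ j)).closure_eq,
    iInf_le μ, fun _ _ => le_iInf, c.idempotent _,
    fun j => (le_iSup μ j).trans (c.le_closure _),
    fun _ hν h => c.closure_min (iSup_le h) (hclosed hν)⟩
end

section
/- Let (L₁, L₂, P, (⊛ᵢ, ↙ⁱ, ↖ᵢ)_{i∈I}) be a multi-adjoint frame, (X, Y, φ, τ) a context of this frame, and φ↑, φ↓ the associated concept-forming operators. The multi-adjoint concept lattice M = { (μ, λ) ∈ (X → L₁) × (Y → L₂) ∣ φ↑ μ = λ and φ↓ λ = μ }, ordered by (μ₁, λ₁) ≤ (μ₂, λ₂) ⇔ μ₁ ≤ μ₂ pointwise, is a complete lattice, and the first projection (μ, λ) ↦ μ is an order isomorphism from M onto the complete lattice Fix(φ↓∘φ↑) = { μ : X → L₁ ∣ φ↓(φ↑ μ) = μ } with the pointwise order. -/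
/-!
The concept-forming operators form an antitone Galois connection between `X → L₁` and
`Y → L₂`: both `lam ≤ φ↑ μ` and `μ ≤ φ↓ lam` unfold, through the adjoint triples, to
`lam y ≤ φ(x, y) ↖_{τ y} μ x` for all `x, y`. Hence `φ↓ ∘ φ↑` is a closure operator, whose
closed elements form a complete lattice. A concept is determined by its extent, and the
extents are exactly these closed elements, so the lattice structure transfers to concepts.
-/

/-- The multi-adjoint concept lattice of a context: pairs `(μ, lam)` with
`φ↑ μ = lam` and `φ↓ lam = μ`. -/
abbrev MAConceptLattice {L₁ L₂ : Type*} {X Y : Type*}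
    (up : (X → L₁) → Y → L₂) (dn : (Y → L₂) → X → L₁) : Type _ :=
  {p : (X → L₁) × (Y → L₂) // up p.1 = p.2 ∧ dn p.2 = p.1}

/-- Concepts are ordered by comparing their extents `μ` (pointwise). -/
instance {L₁ L₂ : Type*} [Preorder L₁] {X Y : Type*}
    (up : (X → L₁) → Y → L₂) (dn : (Y → L₂) → X → L₁) :
    LE (MAConceptLattice up dn) :=
  ⟨fun p q => p.1.1 ≤ q.1.1⟩

open OrderDual

theorem galoisConnection_conceptForming {L₁ L₂ P I X Y : Type*}
    [CompleteLattice L₁] [CompleteLattice L₂]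
    (ld : I → P → L₂ → L₁) (lu : I → P → L₁ → L₂)
    (hadj : ∀ (i : I) (z : P) (x : L₁) (y : L₂), x ≤ ld i z y ↔ y ≤ lu i z x)
    (φ : X → Y → P) (τ : Y → I)
    (up : (X → L₁) → Y → L₂) (dn : (Y → L₂) → X → L₁)
    (hup : ∀ (μ : X → L₁) (y : Y), up μ y = ⨅ x, lu (τ y) (φ x y) (μ x))
    (hdn : ∀ (lam : Y → L₂) (x : X), dn lam x = ⨅ y, ld (τ y) (φ x y) (lam y)) :
    GaloisConnection (toDual ∘ up) (dn ∘ ofDual) := by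
  intro μ lam
  simp only [Function.comp_apply, toDual_le, Pi.le_def, hup, hdn, le_iInf_iff, hadj]
  exact forall_comm

abbrev GaloisConnection.completeLatticeFixedPoints {α β : Type*} [CompleteLattice α]
    [Preorder β] {up : α → β} {dn : β → α} (gc : GaloisConnection (toDual ∘ up) (dn ∘ ofDual)) :
    CompleteLattice {a // dn (up a) = a} :=
  gc.closureOperator.gi.liftCompleteLattice

namespace MAConceptLattice

variable {L₁ L₂ X Y : Type*} [Preorder L₁] (up : (X → L₁) → Y → L₂) (dn : (Y → L₂) → X → L₁)

def extentIso : MAConceptLattice up dn ≃o {μ : X → L₁ // dn (up μ) = μ} where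
  toFun p := ⟨p.1.1, by rw [p.2.1, p.2.2]⟩
  invFun μ := ⟨(μ.1, up μ.1), rfl, μ.2⟩
  left_inv p := Subtype.ext (Prod.ext rfl p.2.1)
  right_inv _ := rfl
  map_rel_iff' := Iff.rfl

end MAConceptLattice

/-- The multi-adjoint concept lattice, ordered by first
components, is a complete lattice, and the first projection is an order
isomorphism onto the fixed points of `φ↓ ∘ φ↑` with the pointwise order. -/
theorem stmt_7 {L₁ L₂ P : Type*} [CompleteLattice L₁] [CompleteLattice L₂]
    [CompleteLattice P] {I : Type*}
    (w : I → L₁ → L₂ → P) (ld : I → P → L₂ → L₁) (lu : I → P → L₁ → L₂)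
    (adj : ∀ (i : I) (x : L₁) (y : L₂) (z : P),
      (w i x y ≤ z ↔ x ≤ ld i z y) ∧ (w i x y ≤ z ↔ y ≤ lu i z x))
    {X Y : Type*} (φ : X → Y → P) (τ : Y → I)
    (up : (X → L₁) → Y → L₂) (dn : (Y → L₂) → X → L₁)
    (hup : ∀ (μ : X → L₁) (y : Y), up μ y = ⨅ x, lu (τ y) (φ x y) (μ x))
    (hdn : ∀ (lam : Y → L₂) (x : X), dn lam x = ⨅ y, ld (τ y) (φ x y) (lam y)) :
    -- the concept lattice is a complete lattice whose order is the one above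
    (∃ inst : CompleteLattice (MAConceptLattice up dn),
      ∀ p q : MAConceptLattice up dn, inst.le p q ↔ p ≤ q) ∧
    -- the first projection is an order isomorphism onto `Fix (φ↓ ∘ φ↑)`
    (∃ e : MAConceptLattice up dn ≃o {μ : X → L₁ // dn (up μ) = μ},
      ∀ p : MAConceptLattice up dn, (e p : X → L₁) = p.1.1) := by
  have gc := galoisConnection_conceptForming ld lu
    (fun i z x y => (adj i x y z).1.symm.trans (adj i x y z).2) φ τ up dn hup hdn
  let _ := gc.completeLatticeFixedPoints
  let e := MAConceptLattice.extentIso up dn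
  exact ⟨⟨e.toEquiv.completeLattice, fun _ _ => e.le_iff_le⟩, e, fun _ => rfl⟩
end

section
/- Let (L₁, L₂, P, (⊛ᵢ, ↙ⁱ, ↖ᵢ)_{i∈I}) be a multi-adjoint property-oriented frame and (X, Y, φ, τ) a context of this frame. Define φ* : (Y → L₂) → (X → L₁) by (φ* λ)(x) = ⨆_{y∈Y} φ(x,y) ⊛_{τ(y)} λ(y), and φ_* : (X → L₁) → (Y → L₂) by (φ_* μ)(y) = ⨅_{x∈X} μ(x) ↖_{τ(y)} φ(x,y). Then (φ*, φ_*) is a (covariant) Galois connection: for all λ : Y → L₂ and μ : X → L₁, φ* λ ≤ μ (pointwise in L₁) if and only if λ ≤ φ_* μ (pointwise in L₂). -/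
/-! A family of Galois connections between the components of two products of lattices induces,
by taking suprema on one side and infima on the other, a Galois connection between the products:
both sides of the resulting equivalence unfold to `∀ x y, l x y (λ y) ≤ μ x`.
The adjoint triples of the frame supply such a family, `(φ x y ⊛_{τ y} ·) ⊣ (· ↖_{τ y} φ x y)`. -/

theorem galoisConnection_iSup_iInf {X Y : Type*} {α : X → Type*} {β : Y → Type*}
    [∀ x, CompleteLattice (α x)] [∀ y, CompleteLattice (β y)]
    {l : ∀ x y, β y → α x} {u : ∀ x y, α x → β y} (gc : ∀ x y, GaloisConnection (l x y) (u x y)) :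
    GaloisConnection (fun lam x ↦ ⨆ y, l x y (lam y)) (fun μ y ↦ ⨅ x, u x y (μ x)) := by
  intro lam μ
  simp only [Pi.le_def, iSup_le_iff, le_iInf_iff, (gc _ _).le_iff_le]
  exact forall_comm

/-- For a context of a multi-adjoint property-oriented frame, the
operators `φ*` and `φ_*` form a (covariant) Galois connection. -/
theorem stmt_10 {L₁ L₂ P : Type*} [CompleteLattice L₁] [CompleteLattice L₂]
    [CompleteLattice P] {I : Type*}
    (w : I → P → L₂ → L₁) (ld : I → L₁ → L₂ → P) (lu : I → L₁ → P → L₂)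
    (adj : ∀ (i : I) (z : P) (y : L₂) (x : L₁),
      (w i z y ≤ x ↔ z ≤ ld i x y) ∧ (w i z y ≤ x ↔ y ≤ lu i x z))
    {X Y : Type*} (φ : X → Y → P) (τ : Y → I)
    (star : (Y → L₂) → X → L₁) (lstar : (X → L₁) → Y → L₂)
    (hstar : ∀ (lam : Y → L₂) (x : X), star lam x = ⨆ y, w (τ y) (φ x y) (lam y))
    (hlstar : ∀ (μ : X → L₁) (y : Y), lstar μ y = ⨅ x, lu (τ y) (μ x) (φ x y)) :
    ∀ (lam : Y → L₂) (μ : X → L₁), star lam ≤ μ ↔ lam ≤ lstar μ := by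
  obtain rfl : star = fun lam x ↦ ⨆ y, w (τ y) (φ x y) (lam y) := funext₂ hstar
  obtain rfl : lstar = fun μ y ↦ ⨅ x, lu (τ y) (μ x) (φ x y) := funext₂ hlstar
  exact galoisConnection_iSup_iInf fun x y lam μ ↦ (adj (τ y) (φ x y) lam μ).2
end

section
/- Let (L₁, L₂, P, (⊛ᵢ, ↙ⁱ, ↖ᵢ)_{i∈I}) be a multi-adjoint property-oriented frame, (X, Y, φ, τ) a context of this frame, and φ*, φ_* the associated operators. Then φ_* restricted to Fix(φ*∘φ_*) = { μ : X → L₁ ∣ φ*(φ_* μ) = μ } and φ* restricted to Fix(φ_*∘φ*) = { λ : Y → L₂ ∣ φ_*(φ* λ) = λ } are mutually inverse, order-preserving bijections between these two fixed-point sets (each taken with the pointwise order). -/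
/-!
Each adjoint triple gives Galois connections `w i z ⊣ (lu i · z)`, so `φ*` and `φ_*` are monotone.
For any monotone `f : α → β` and `g : β → α`, `f` and `g` restrict to mutually inverse maps between
the fixed points of `g ∘ f` and of `f ∘ g`, and the restriction of `f` reflects the order because
`a = g (f a) ≤ g (f a') = a'` whenever `f a ≤ f a'`.
-/

section FixedPointsComp

variable {α β : Type*} [Preorder α] [Preorder β] {f : α → β} {g : β → α}

def Monotone.orderIsoFixedPointsComp (hf : Monotone f) (hg : Monotone g) :
    {a // g (f a) = a} ≃o {b // f (g b) = b} where
  toFun a := ⟨f a, by rw [a.2]⟩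
  invFun b := ⟨g b, by rw [b.2]⟩
  left_inv a := Subtype.ext a.2
  right_inv b := Subtype.ext b.2
  map_rel_iff' {a a'} := by
    refine ⟨fun h => ?_, fun h => hf h⟩
    change a.1 ≤ a'.1
    rw [← a.2, ← a'.2]
    exact hg h

end FixedPointsComp

section PointwiseOperators

variable {X Y α β : Type*}

theorem monotone_of_forall_eq_iSup [CompleteLattice α] [Preorder β] {op : (Y → β) → X → α}
    (k : X → Y → β → α) (hk : ∀ x y, Monotone (k x y))
    (hop : ∀ lam x, op lam x = ⨆ y, k x y (lam y)) : Monotone op := by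
  intro lam lam' h x
  rw [hop, hop]
  exact iSup_mono fun y => hk x y (h y)

theorem monotone_of_forall_eq_iInf [CompleteLattice β] [Preorder α] {op : (X → α) → Y → β}
    (k : Y → X → α → β) (hk : ∀ y x, Monotone (k y x))
    (hop : ∀ μ y, op μ y = ⨅ x, k y x (μ x)) : Monotone op := by
  intro μ μ' h y
  rw [hop, hop]
  exact iInf_mono fun x => hk y x (h x)

end PointwiseOperators

/-- `φ_*` and `φ*` restrict to mutually inverse, order-preserving
bijections between the fixed points of `φ* ∘ φ_*` and those of `φ_* ∘ φ*`. -/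
theorem stmt_13 {L₁ L₂ P : Type*} [CompleteLattice L₁] [CompleteLattice L₂]
    [CompleteLattice P] {I : Type*}
    (w : I → P → L₂ → L₁) (ld : I → L₁ → L₂ → P) (lu : I → L₁ → P → L₂)
    (adj : ∀ (i : I) (z : P) (y : L₂) (x : L₁),
      (w i z y ≤ x ↔ z ≤ ld i x y) ∧ (w i z y ≤ x ↔ y ≤ lu i x z))
    {X Y : Type*} (φ : X → Y → P) (τ : Y → I)
    (star : (Y → L₂) → X → L₁) (lstar : (X → L₁) → Y → L₂)
    (hstar : ∀ (lam : Y → L₂) (x : X), star lam x = ⨆ y, w (τ y) (φ x y) (lam y))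
    (hlstar : ∀ (μ : X → L₁) (y : Y), lstar μ y = ⨅ x, lu (τ y) (μ x) (φ x y)) :
    ∃ (f : {μ : X → L₁ // star (lstar μ) = μ} → {lam : Y → L₂ // lstar (star lam) = lam})
      (g : {lam : Y → L₂ // lstar (star lam) = lam} → {μ : X → L₁ // star (lstar μ) = μ}),
      -- `f` is the restriction of `φ_*` and `g` is the restriction of `φ*`
      (∀ μ, (f μ : Y → L₂) = lstar μ) ∧
      (∀ lam, (g lam : X → L₁) = star lam) ∧
      -- they are mutually inverse (hence bijections)
      Function.LeftInverse g f ∧ Function.RightInverse g f ∧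
      -- and order-preserving
      (∀ μ μ', μ ≤ μ' → f μ ≤ f μ') ∧
      (∀ lam lam', lam ≤ lam' → g lam ≤ g lam') := by
  have gc (i : I) (z : P) : GaloisConnection (w i z) (lu i · z) := fun y x => (adj i z y x).2
  have star_mono : Monotone star :=
    monotone_of_forall_eq_iSup _ (fun x y => (gc (τ y) (φ x y)).monotone_l) hstar
  have lstar_mono : Monotone lstar :=
    monotone_of_forall_eq_iInf (fun y x a => lu (τ y) a (φ x y))
      (fun y x => (gc (τ y) (φ x y)).monotone_u) hlstar
  let e := lstar_mono.orderIsoFixedPointsComp star_mono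
  exact ⟨e, e.symm, fun _ => rfl, fun _ => rfl, e.symm_apply_apply, e.apply_symm_apply,
    fun _ _ h => e.monotone h, fun _ _ h => e.symm.monotone h⟩
end

section
/- Let (L₁, L₂, P, (⊛ᵢ, ↙ⁱ, ↖ᵢ)_{i∈I}) be a multi-adjoint object-oriented frame, (X, Y, φ, τ) a context of this frame, and φ†, φ_† the associated operators. The multi-adjoint object-oriented concept lattice K† = { (μ, λ) ∈ (X → L₁) × (Y → L₂) ∣ φ_† λ = μ and φ† μ = λ }, ordered by (μ₁, λ₁) ≤ (μ₂, λ₂) ⇔ λ₁ ≤ λ₂ pointwise, is a complete lattice, and the second projection (μ, λ) ↦ λ is an order isomorphism from K† onto the complete lattice Fix(φ†∘φ_†) = { λ : Y → L₂ ∣ φ†(φ_† λ) = λ } with the pointwise order. -/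
/-!
A concept `(μ, λ)` is determined by `λ`, since `μ = φ_† λ`, and the extents `λ` that occur are
exactly the fixed points of `φ† ∘ φ_†`; with the order on second components this makes the
second projection an order isomorphism. Pointwise, the adjoint-triple law
`x ⊛ᵢ z ≤ y ↔ x ≤ y ↙ⁱ z` makes `φ† ⊣ φ_†` a Galois connection, so `φ† ∘ φ_†` is monotone
and its fixed points form a complete lattice by Knaster–Tarski, which is transported back to
the concept lattice.
-/

/-- The multi-adjoint object-oriented concept lattice of a context: pairs
`(μ, lam)` with `φ_† lam = μ` and `φ† μ = lam`. -/
abbrev MAObjConceptLattice {L₁ L₂ : Type*} {X Y : Type*}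
    (dag : (X → L₁) → Y → L₂) (ldag : (Y → L₂) → X → L₁) : Type _ :=
  {p : (X → L₁) × (Y → L₂) // ldag p.2 = p.1 ∧ dag p.1 = p.2}

/-- Concepts are ordered by comparing their second components (pointwise). -/
instance {L₁ L₂ : Type*} [Preorder L₂] {X Y : Type*}
    (dag : (X → L₁) → Y → L₂) (ldag : (Y → L₂) → X → L₁) :
    LE (MAObjConceptLattice dag ldag) :=
  ⟨fun p q => p.1.2 ≤ q.1.2⟩

theorem galoisConnection_of_adjoint {L₁ L₂ P I X Y : Type*} [CompleteLattice L₁]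
    [CompleteLattice L₂] (w : I → L₁ → P → L₂) (ld : I → L₂ → P → L₁)
    (adj : ∀ (i : I) (x : L₁) (z : P) (y : L₂), w i x z ≤ y ↔ x ≤ ld i y z)
    (φ : X → Y → P) (τ : Y → I)
    {dag : (X → L₁) → Y → L₂} {ldag : (Y → L₂) → X → L₁}
    (hdag : ∀ (μ : X → L₁) (y : Y), dag μ y = ⨆ x, w (τ y) (μ x) (φ x y))
    (hldag : ∀ (lam : Y → L₂) (x : X), ldag lam x = ⨅ y, ld (τ y) (lam y) (φ x y)) :
    GaloisConnection dag ldag := fun μ lam => by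
  simp only [Pi.le_def, hdag, hldag, iSup_le_iff, le_iInf_iff, adj]
  exact forall_comm

namespace MAObjConceptLattice

variable {L₁ L₂ X Y : Type*} {dag : (X → L₁) → Y → L₂} {ldag : (Y → L₂) → X → L₁}

theorem dag_ldag_snd (p : MAObjConceptLattice dag ldag) : dag (ldag p.1.2) = p.1.2 := by
  rw [p.2.1, p.2.2]

theorem snd_injective :
    Function.Injective fun p : MAObjConceptLattice dag ldag => p.1.2 :=
  fun p q (h : p.1.2 = q.1.2) =>
  Subtype.ext (Prod.ext (p.2.1.symm.trans (h ▸ q.2.1)) h)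

instance [PartialOrder L₂] : PartialOrder (MAObjConceptLattice dag ldag) :=
  PartialOrder.lift _ snd_injective

def sndOrderIso [Preorder L₂] :
    MAObjConceptLattice dag ldag ≃o {lam : Y → L₂ // dag (ldag lam) = lam} where
  toFun p := ⟨p.1.2, dag_ldag_snd p⟩
  invFun lam := ⟨(ldag lam.1, lam.1), rfl, lam.2⟩
  left_inv p := Subtype.ext (Prod.ext p.2.1 rfl)
  right_inv _ := rfl
  map_rel_iff' := Iff.rfl

noncomputable abbrev completeLattice [CompleteLattice L₂]
    (hmono : Monotone fun lam => dag (ldag lam)) : CompleteLattice (MAObjConceptLattice dag ldag) :=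
  letI : CompleteLattice {lam : Y → L₂ // dag (ldag lam) = lam} :=
    fixedPoints.completeLattice ⟨_, hmono⟩
  (sndOrderIso (dag := dag) (ldag := ldag)).symm.toGaloisInsertion.liftCompleteLattice

end MAObjConceptLattice

open MAObjConceptLattice in
/-- The multi-adjoint object-oriented concept lattice, ordered
by second components, is a complete lattice, and the second projection is an
order isomorphism onto the fixed points of `φ† ∘ φ_†` with the pointwise
order. -/
theorem stmt_16 {L₁ L₂ P : Type*} [CompleteLattice L₁] [CompleteLattice L₂]
    [CompleteLattice P] {I : Type*}
    (w : I → L₁ → P → L₂) (ld : I → L₂ → P → L₁) (lu : I → L₂ → L₁ → P)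
    (adj : ∀ (i : I) (x : L₁) (z : P) (y : L₂),
      (w i x z ≤ y ↔ x ≤ ld i y z) ∧ (w i x z ≤ y ↔ z ≤ lu i y x))
    {X Y : Type*} (φ : X → Y → P) (τ : Y → I)
    (dag : (X → L₁) → Y → L₂) (ldag : (Y → L₂) → X → L₁)
    (hdag : ∀ (μ : X → L₁) (y : Y), dag μ y = ⨆ x, w (τ y) (μ x) (φ x y))
    (hldag : ∀ (lam : Y → L₂) (x : X), ldag lam x = ⨅ y, ld (τ y) (lam y) (φ x y)) :
    -- the concept lattice is a complete lattice whose order is the one above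
    (∃ inst : CompleteLattice (MAObjConceptLattice dag ldag),
      ∀ p q : MAObjConceptLattice dag ldag, inst.le p q ↔ p ≤ q) ∧
    -- the second projection is an order isomorphism onto `Fix (φ† ∘ φ_†)`
    (∃ e : MAObjConceptLattice dag ldag ≃o {lam : Y → L₂ // dag (ldag lam) = lam},
      ∀ p : MAObjConceptLattice dag ldag, (e p : Y → L₂) = p.1.2) := by
  have gc := galoisConnection_of_adjoint w ld (fun i x z y => (adj i x z y).1) φ τ hdag hldag
  exact ⟨⟨completeLattice (gc.monotone_l.comp gc.monotone_u), fun _ _ => Iff.rfl⟩,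
    ⟨sndOrderIso, fun _ => rfl⟩⟩
end
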